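/- arXiv:2008.09952 — 2 statements merged into one kernel-verified Lean document; each statement's English description precedes it below -/
import Mathlib

section
/- Let n ≥ 1, let 𝒪 be a bounded open subset of ℝⁿ and let 𝒪' be an open subset with 𝒪' ⊆ 𝒪. If u : ℝⁿ → ℝ is measurable and vanishes almost everywhere on the complement of 𝒪', then ‖u‖_{∼,1/2,𝒪}² ≤ (2ω_n + 1) ‖u‖_{∼,1/2,𝒪'}², i.e. ‖u‖_{∼,1/2,𝒪} ≤ (2ω_n + 1)^{1/2} ‖u‖_{∼,1/2,𝒪'}. -/
open MeasureTheory Metric Set ENNReal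

/-- The squared half-order weighted Sobolev norm on an open set `O ⊆ ℝⁿ`:
`‖u‖_{∼,1/2,O}² = ∬_{O×O} |u(x)−u(y)|²/|x−y|^{n+1} dx dy + ∫_O |u(x)|²/dist(x,∂O) dx`,
with values in `[0,∞]`. -/
noncomputable def halfNormSq (n : ℕ) (O : Set (EuclideanSpace ℝ (Fin n)))
    (u : EuclideanSpace ℝ (Fin n) → ℝ) : ℝ≥0∞ :=
  (∫⁻ x in O, ∫⁻ y in O, ENNReal.ofReal ((u x - u y) ^ 2 / dist x y ^ (n + 1))) +
    ∫⁻ x in O, ENNReal.ofReal ((u x) ^ 2 / infDist x Oᶜ)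

/-- The surface area `ω_n` of the unit sphere in `ℝⁿ`, as an extended nonnegative real. -/
noncomputable def surfaceAreaUnitSphere (n : ℕ) : ℝ≥0∞ :=
  (n : ℝ≥0∞) * volume (Metric.ball (0 : EuclideanSpace ℝ (Fin n)) 1)

/-! Split `O = O' ∪ (O \ O')`. Since `u` vanishes on `O \ O'`, the part of the double integral
over `(O \ O') × (O \ O')` vanishes, and the two mixed parts (equal by symmetry) have the integrand
`u(x)² / |x - y|^{n+1}` with `x ∈ O'` and `y ∉ O'`, hence `|x - y| ≥ d(x) := dist(x, ∂O')`.
Integrating `|x - y|^{-(n+1)}` over `|x - y| ≥ d(x)` in polar coordinates gives exactly `ω_n / d(x)`,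
so each mixed part is at most `ω_n ∫_{O'} u²/d`. The boundary term only decreases when `O` shrinks
to `O'`, because `dist(x, ∂O') ≤ dist(x, ∂O)` on `O'`. -/

theorem IsOpen.infDist_compl_pos {α : Type*} [PseudoMetricSpace α] {U : Set α} (hU : IsOpen U)
    (hUc : Uᶜ.Nonempty) {x : α} (hx : x ∈ U) : 0 < infDist x Uᶜ :=
  (hU.isClosed_compl.notMem_iff_infDist_pos hUc).1 (not_not.2 hx)

theorem div_infDist_compl_le_of_subset {α : Type*} [PseudoMetricSpace α] {U V : Set α}
    (hU : IsOpen U) (hUV : U ⊆ V) {x : α} (hx : x ∈ U) {a : ℝ} (ha : 0 ≤ a) :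
    a / infDist x Vᶜ ≤ a / infDist x Uᶜ := by
  rcases Vᶜ.eq_empty_or_nonempty with hVc | hVc
  · -- `infDist x ∅ = 0`, so the left-hand side is the junk value `a / 0 = 0`.
    simp [hVc, div_nonneg ha infDist_nonneg]
  have hcompl : Vᶜ ⊆ Uᶜ := compl_subset_compl.2 hUV
  exact div_le_div_of_nonneg_left ha (hU.infDist_compl_pos (hVc.mono hcompl) hx)
    (infDist_le_infDist_of_subset hcompl hVc)

theorem setLIntegral_sq_div_infDist_compl_le {α : Type*} [PseudoMetricSpace α] [MeasurableSpace α]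
    [OpensMeasurableSpace α] {μ : Measure α} {U V : Set α} (hU : IsOpen U) (hUV : U ⊆ V)
    {u : α → ℝ} (hu : ∀ᵐ x ∂μ.restrict (V \ U), u x = 0) :
    ∫⁻ x in V, ENNReal.ofReal (u x ^ 2 / infDist x Vᶜ) ∂μ
      ≤ ∫⁻ x in U, ENNReal.ofReal (u x ^ 2 / infDist x Uᶜ) ∂μ :=
  calc ∫⁻ x in V, ENNReal.ofReal (u x ^ 2 / infDist x Vᶜ) ∂μ
      ≤ ∫⁻ x in U, ENNReal.ofReal (u x ^ 2 / infDist x Vᶜ) ∂μ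
        + ∫⁻ x in V \ U, ENNReal.ofReal (u x ^ 2 / infDist x Vᶜ) ∂μ := by
        simpa only [union_sdiff_cancel hUV] using
          lintegral_union_le (fun x => ENNReal.ofReal (u x ^ 2 / infDist x Vᶜ)) U (V \ U)
    _ = ∫⁻ x in U, ENNReal.ofReal (u x ^ 2 / infDist x Vᶜ) ∂μ := by
        rw [lintegral_eq_zero_of_ae_eq_zero (hu.mono fun x hx => by simp [hx]), add_zero]
    _ ≤ _ := setLIntegral_mono' hU.measurableSet fun x hx =>
        ENNReal.ofReal_le_ofReal (div_infDist_compl_le_of_subset hU hUV hx (sq_nonneg _))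

theorem lintegral_lintegral_union_le_of_symm {α : Type*} [MeasurableSpace α] {μ : Measure α}
    [SFinite μ] {A B : Set α} {f : α → α → ℝ≥0∞} (hf : Measurable (Function.uncurry f))
    (hsymm : ∀ x y, f x y = f y x) (hB : ∀ᵐ x ∂μ.restrict B, ∀ᵐ y ∂μ.restrict B, f x y = 0) :
    ∫⁻ x in A ∪ B, ∫⁻ y in A ∪ B, f x y ∂μ ∂μ
      ≤ ∫⁻ x in A, ∫⁻ y in A, f x y ∂μ ∂μ + 2 * ∫⁻ x in A, ∫⁻ y in B, f x y ∂μ ∂μ := by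
  have hswap : ∫⁻ x in B, ∫⁻ y in A, f x y ∂μ ∂μ = ∫⁻ x in A, ∫⁻ y in B, f x y ∂μ ∂μ := by
    rw [lintegral_lintegral_swap hf.aemeasurable]
    simp_rw [hsymm]
  have hBB : ∫⁻ x in B, ∫⁻ y in B, f x y ∂μ ∂μ = 0 :=
    lintegral_eq_zero_of_ae_eq_zero (hB.mono fun _ hx => lintegral_eq_zero_of_ae_eq_zero hx)
  calc ∫⁻ x in A ∪ B, ∫⁻ y in A ∪ B, f x y ∂μ ∂μ
      ≤ ∫⁻ x, ∫⁻ y, f x y ∂(μ.restrict A + μ.restrict B) ∂(μ.restrict A + μ.restrict B) :=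
        lintegral_mono' (Measure.restrict_union_le A B)
          fun x => lintegral_mono' (Measure.restrict_union_le A B) le_rfl
    _ = _ := by
        simp only [lintegral_add_measure]
        rw [lintegral_add_left hf.lintegral_prod_right, lintegral_add_left hf.lintegral_prod_right,
          hswap, hBB]
        ring

theorem lintegral_Ioi_inv_sq {d : ℝ} (hd : 0 < d) :
    ∫⁻ r in Ioi d, ENNReal.ofReal ((r ^ 2)⁻¹) = ENNReal.ofReal d⁻¹ := by
  have hpow : EqOn (fun r : ℝ => (r ^ 2)⁻¹) (fun r => r ^ (-2 : ℝ)) (Ioi d) := fun r hr => by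
    simp [Real.rpow_neg (hd.trans hr).le]
  rw [← ofReal_integral_eq_lintegral_ofReal
      ((integrableOn_Ioi_rpow_of_lt (by norm_num) hd).congr_fun hpow.symm measurableSet_Ioi)
      (ae_of_all _ fun r => by positivity),
    setIntegral_congr_fun measurableSet_Ioi hpow, integral_Ioi_rpow_of_lt (by norm_num) hd]
  norm_num [Real.rpow_neg_one]

section PolarCoordinates

variable {E : Type*} [NormedAddCommGroup E] [NormedSpace ℝ E] [FiniteDimensional ℝ E]
  [MeasurableSpace E] [BorelSpace E] (μ : Measure E) [μ.IsAddHaarMeasure]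

open Module

theorem lintegral_fun_norm_addHaar [Nontrivial E] {g : ℝ → ℝ≥0∞} (hg : Measurable g) :
    ∫⁻ x, g ‖x‖ ∂μ = finrank ℝ E * μ (ball 0 1) *
      ∫⁻ r in Ioi (0 : ℝ), ENNReal.ofReal (r ^ (finrank ℝ E - 1)) * g r := by
  calc ∫⁻ x, g ‖x‖ ∂μ = ∫⁻ x : ({0}ᶜ : Set E), g ‖x.1‖ ∂(μ.comap (↑)) := by
        rw [lintegral_subtype_comap (measurableSet_singleton _).compl (fun x => g ‖x‖),
          restrict_compl_singleton]
    _ = ∫⁻ p, g p.2 ∂(μ.toSphere.prod (.volumeIoiPow (finrank ℝ E - 1))) := by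
        simpa using (μ.measurePreserving_homeomorphUnitSphereProd.lintegral_comp_emb
          (Homeomorph.measurableEmbedding _) (g ∘ Subtype.val ∘ Prod.snd))
    _ = μ.toSphere univ * ∫⁻ r, g r ∂(.volumeIoiPow (finrank ℝ E - 1)) := by
        rw [lintegral_prod _ (by fun_prop)]
        simp [lintegral_const, mul_comm]
    _ = _ := by
        rw [Measure.toSphere_apply_univ, Measure.volumeIoiPow,
          lintegral_withDensity_eq_lintegral_mul _ (by fun_prop) (by fun_prop),
          ← lintegral_subtype_comap measurableSet_Ioi]
        rfl

theorem lintegral_compl_ball_inv_norm_pow [Nontrivial E] {d : ℝ} (hd : 0 < d) :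
    ∫⁻ x in (ball 0 d)ᶜ, ENNReal.ofReal ((‖x‖ ^ (finrank ℝ E + 1))⁻¹) ∂μ
      = finrank ℝ E * μ (ball 0 1) / ENNReal.ofReal d := by
  set k := finrank ℝ E
  have hk : 1 ≤ k := finrank_pos
  set g : ℝ → ℝ≥0∞ := (Ici d).indicator fun r => ENNReal.ofReal ((r ^ (k + 1))⁻¹)
  have hg : Measurable g := (by fun_prop : Measurable _).indicator measurableSet_Ici
  have hradial : ∫⁻ r in Ioi (0 : ℝ), ENNReal.ofReal (r ^ (k - 1)) * g r
      = ∫⁻ r in Ioi d, ENNReal.ofReal ((r ^ 2)⁻¹) := by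
    simp only [g, ← indicator_mul_right (Ici d) fun r => ENNReal.ofReal (r ^ (k - 1))]
    rw [lintegral_indicator measurableSet_Ici, Measure.restrict_restrict measurableSet_Ici,
      inter_eq_left.2 (Ici_subset_Ioi.2 hd), ← Measure.restrict_congr_set Ioi_ae_eq_Ici]
    refine setLIntegral_congr_fun measurableSet_Ioi fun r hr => ?_
    have hr0 : 0 < r := hd.trans hr
    have hsplit : r ^ (k + 1) = r ^ (k - 1) * r ^ 2 := by rw [← pow_add]; congr 1; omega
    rw [← ENNReal.ofReal_mul (by positivity), hsplit]
    field_simp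
  calc ∫⁻ x in (ball 0 d)ᶜ, ENNReal.ofReal ((‖x‖ ^ (k + 1))⁻¹) ∂μ = ∫⁻ x, g ‖x‖ ∂μ := by
        rw [← lintegral_indicator measurableSet_ball.compl]
        congr 1 with x
        by_cases hx : d ≤ ‖x‖ <;> simp [g, hx]
    _ = _ := by
        rw [lintegral_fun_norm_addHaar μ hg, hradial, lintegral_Ioi_inv_sq hd,
          ENNReal.ofReal_inv_of_pos hd, div_eq_mul_inv]

theorem lintegral_compl_ball_inv_dist_pow [Nontrivial E] (c : E) {d : ℝ} (hd : 0 < d) :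
    ∫⁻ y in (ball c d)ᶜ, ENNReal.ofReal ((dist c y ^ (finrank ℝ E + 1))⁻¹) ∂μ
      = finrank ℝ E * μ (ball 0 1) / ENNReal.ofReal d := by
  rw [← (measurePreserving_add_left μ c).setLIntegral_comp_preimage_emb
    (Homeomorph.addLeft c).measurableEmbedding, ← lintegral_compl_ball_inv_norm_pow μ hd]
  have hpre : (c + ·) ⁻¹' (ball c d)ᶜ = (ball 0 d)ᶜ := by ext; simp
  simp [hpre]

theorem lintegral_div_dist_pow_le_of_subset_compl {U S : Set E} (hU : IsOpen U) {z : E}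
    (hz : z ∈ U) (hS : S ⊆ Uᶜ) {a : ℝ} (ha : 0 ≤ a) :
    ∫⁻ w in S, ENNReal.ofReal (a / dist z w ^ (finrank ℝ E + 1)) ∂μ
      ≤ finrank ℝ E * μ (ball 0 1) * ENNReal.ofReal (a / infDist z Uᶜ) := by
  rcases Uᶜ.eq_empty_or_nonempty with hUc | ⟨w, hw⟩
  · simp [subset_empty_iff.1 (hUc ▸ hS)]
  have : Nontrivial E := ⟨z, w, fun h => hw (h ▸ hz)⟩
  set d := infDist z Uᶜ
  have hd : 0 < d := hU.infDist_compl_pos ⟨w, hw⟩ hz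
  have hSball : S ⊆ (ball z d)ᶜ := hS.trans (compl_subset_compl.2 ball_infDist_compl_subset)
  calc ∫⁻ w in S, ENNReal.ofReal (a / dist z w ^ (finrank ℝ E + 1)) ∂μ
      ≤ ∫⁻ w in (ball z d)ᶜ,
          ENNReal.ofReal a * ENNReal.ofReal ((dist z w ^ (finrank ℝ E + 1))⁻¹) ∂μ := by
        refine (lintegral_mono_set hSball).trans_eq (lintegral_congr fun w => ?_)
        rw [div_eq_mul_inv, ENNReal.ofReal_mul ha]
    _ = ENNReal.ofReal a * (finrank ℝ E * μ (ball 0 1) / ENNReal.ofReal d) := by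
        rw [lintegral_const_mul _ (by fun_prop), lintegral_compl_ball_inv_dist_pow μ z hd]
    _ = _ := by
        rw [ENNReal.ofReal_div_of_pos hd, div_eq_mul_inv, div_eq_mul_inv]
        ring

theorem lintegral_lintegral_sq_sub_div_dist_pow_le {U S : Set E} (hU : IsOpen U) (hS : S ⊆ Uᶜ)
    {u : E → ℝ} (hu : Measurable u) (hzero : ∀ᵐ y ∂μ.restrict S, u y = 0) :
    ∫⁻ x in U, ∫⁻ y in S, ENNReal.ofReal ((u x - u y) ^ 2 / dist x y ^ (finrank ℝ E + 1)) ∂μ ∂μ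
      ≤ finrank ℝ E * μ (ball 0 1) * ∫⁻ x in U, ENNReal.ofReal (u x ^ 2 / infDist x Uᶜ) ∂μ := by
  rw [← lintegral_const_mul _ (by fun_prop)]
  refine setLIntegral_mono' hU.measurableSet fun x hx => ?_
  calc ∫⁻ y in S, ENNReal.ofReal ((u x - u y) ^ 2 / dist x y ^ (finrank ℝ E + 1)) ∂μ
      = ∫⁻ y in S, ENNReal.ofReal (u x ^ 2 / dist x y ^ (finrank ℝ E + 1)) ∂μ :=
        lintegral_congr_ae (hzero.mono fun y hy => by simp only [hy, sub_zero])
    _ ≤ _ := lintegral_div_dist_pow_le_of_subset_compl μ hU hx hS (sq_nonneg _)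

end PolarCoordinates

theorem halfNormSq_le_of_support_subset_general (n : ℕ)
    (O O' : Set (EuclideanSpace ℝ (Fin n)))
    (hO' : IsOpen O') (hsub : O' ⊆ O)
    (u : EuclideanSpace ℝ (Fin n) → ℝ) (hu : Measurable u)
    (hzero : ∀ᵐ x ∂(volume : Measure (EuclideanSpace ℝ (Fin n))), x ∉ O' → u x = 0) :
    halfNormSq n O u ≤ (2 * surfaceAreaUnitSphere n + 1) * halfNormSq n O' u := by
  have hvanish : ∀ᵐ x ∂volume.restrict (O \ O'), u x = 0 :=
    ae_restrict_of_ae_restrict_of_subset (sdiff_subset_compl O O')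
      ((ae_restrict_iff' hO'.measurableSet.compl).2 hzero)
  have hsplit := lintegral_lintegral_union_le_of_symm (μ := volume) (A := O') (B := O \ O')
    (f := fun x y => ENNReal.ofReal ((u x - u y) ^ 2 / dist x y ^ (n + 1))) (by fun_prop)
    (fun x y => by rw [dist_comm, ← neg_sub (u x), neg_sq])
    (hvanish.mono fun x hx => hvanish.mono fun y hy => by simp [hx, hy])
  rw [union_sdiff_cancel hsub] at hsplit
  have hcross :=
    lintegral_lintegral_sq_sub_div_dist_pow_le volume hO' (sdiff_subset_compl O O') hu hvanish
  rw [finrank_euclideanSpace_fin] at hcross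
  have hbdry := setLIntegral_sq_div_infDist_compl_le hO' hsub hvanish
  set I' := ∫⁻ x in O', ∫⁻ y in O', ENNReal.ofReal ((u x - u y) ^ 2 / dist x y ^ (n + 1))
  set B' := ∫⁻ x in O', ENNReal.ofReal (u x ^ 2 / infDist x O'ᶜ)
  set ω := surfaceAreaUnitSphere n
  calc halfNormSq n O u ≤ I' + 2 * (ω * B') + B' :=
        add_le_add (hsplit.trans (by gcongr; exact hcross)) hbdry
    _ = I' + (2 * ω + 1) * B' := by ring
    _ ≤ (2 * ω + 1) * (I' + B') := by
        rw [mul_add]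
        gcongr
        exact le_mul_of_one_le_left' le_add_self

theorem halfNormSq_le_of_support_subset (n : ℕ) (hn : 1 ≤ n)
    (O O' : Set (EuclideanSpace ℝ (Fin n)))
    (hO : IsOpen O) (hObdd : Bornology.IsBounded O) (hO' : IsOpen O') (hsub : O' ⊆ O)
    (u : EuclideanSpace ℝ (Fin n) → ℝ) (hu : Measurable u)
    (hzero : ∀ᵐ x ∂(volume : Measure (EuclideanSpace ℝ (Fin n))), x ∉ O' → u x = 0) :
    halfNormSq n O u ≤ (2 * surfaceAreaUnitSphere n + 1) * halfNormSq n O' u :=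
  halfNormSq_le_of_support_subset_general n O O' hO' hsub u hu hzero
end

section
/- Let n ≥ 1, let 𝒪 and 𝒪' be open subsets of ℝⁿ with 𝒪' ⊆ 𝒪, and let u : ℝⁿ → ℝ be measurable and vanish almost everywhere on 𝒪 ∖ 𝒪'. Then the Gagliardo seminorm of order 1/2 on 𝒪 splits as ∬_{𝒪×𝒪} |u(x)−u(y)|²/|x−y|^{n+1} dx dy = ∬_{𝒪'×𝒪'} |u(x)−u(y)|²/|x−y|^{n+1} dx dy + 2 ∫_{𝒪'} (∫_{𝒪∖𝒪'} |x−y|^{−(n+1)} dy) |u(x)|² dx. -/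
open MeasureTheory Set ENNReal

/-!
Split `O × O` into the four blocks cut out by `O'` and `O ∖ O'`. The block `(O ∖ O')²` vanishes
because `u` does, the two mixed blocks agree by Tonelli and the symmetry of the integrand, and on
the mixed block `O' × (O ∖ O')` the integrand is `|x - y|^{-(n+1)} u(x)²`.
-/

namespace MeasureTheory

variable {α : Type*} [MeasurableSpace α] {μ : Measure α}

theorem lintegral_lintegral_union_union [SFinite μ] {F : α → α → ℝ≥0∞}
    (hF : Measurable (Function.uncurry F)) {A B : Set α} (hB : MeasurableSet B)
    (hAB : Disjoint A B) :
    ∫⁻ x in A ∪ B, ∫⁻ y in A ∪ B, F x y ∂μ ∂μ =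
      ((∫⁻ x in A, ∫⁻ y in A, F x y ∂μ ∂μ) + ∫⁻ x in A, ∫⁻ y in B, F x y ∂μ ∂μ) +
        ((∫⁻ x in B, ∫⁻ y in A, F x y ∂μ ∂μ) + ∫⁻ x in B, ∫⁻ y in B, F x y ∂μ ∂μ) := by
  have hA : Measurable fun x => ∫⁻ y in A, F x y ∂μ := hF.lintegral_prod_right
  rw [lintegral_union hB hAB]
  simp_rw [lintegral_union hB hAB]
  rw [lintegral_add_left hA, lintegral_add_left hA]

theorem lintegral_lintegral_union_of_symm [SFinite μ] {F : α → α → ℝ≥0∞}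
    (hF : Measurable (Function.uncurry F)) (hsymm : ∀ x y, F x y = F y x) {A B : Set α}
    (hB : MeasurableSet B) (hAB : Disjoint A B) :
    ∫⁻ x in A ∪ B, ∫⁻ y in A ∪ B, F x y ∂μ ∂μ =
      (∫⁻ x in A, ∫⁻ y in A, F x y ∂μ ∂μ) + 2 * (∫⁻ x in A, ∫⁻ y in B, F x y ∂μ ∂μ) +
        ∫⁻ x in B, ∫⁻ y in B, F x y ∂μ ∂μ := by
  have hswap : ∫⁻ x in B, ∫⁻ y in A, F x y ∂μ ∂μ = ∫⁻ x in A, ∫⁻ y in B, F x y ∂μ ∂μ := by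
    rw [lintegral_lintegral_swap hF.aemeasurable]
    simp_rw [hsymm]
  rw [lintegral_lintegral_union_union hF hB hAB, hswap, two_mul]
  ring

variable (k : α → α → ℝ) {u : α → ℝ} {c : Set α}

theorem lintegral_sq_sub_div_eq_mul_of_ae_eq_zero (hu : ∀ᵐ y ∂μ.restrict c, u y = 0) (x : α) :
    ∫⁻ y in c, ENNReal.ofReal ((u x - u y) ^ 2 / k x y) ∂μ =
      (∫⁻ y in c, ENNReal.ofReal (1 / k x y) ∂μ) * ENNReal.ofReal (u x ^ 2) := by
  rw [← lintegral_mul_const' _ _ ofReal_ne_top]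
  refine lintegral_congr_ae ?_
  filter_upwards [hu] with y hy
  rw [hy, sub_zero, ← ofReal_mul' (sq_nonneg _), one_div_mul_eq_div]

theorem lintegral_lintegral_sq_sub_div_eq_zero (hu : ∀ᵐ y ∂μ.restrict c, u y = 0) :
    ∫⁻ x in c, ∫⁻ y in c, ENNReal.ofReal ((u x - u y) ^ 2 / k x y) ∂μ ∂μ = 0 := by
  refine lintegral_eq_zero_of_ae_eq_zero ?_
  filter_upwards [hu] with x hx
  rw [lintegral_sq_sub_div_eq_mul_of_ae_eq_zero k hu x, hx]
  simp

end MeasureTheory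

theorem gagliardo_half_split_general (n : ℕ)
    (O O' : Set (EuclideanSpace ℝ (Fin n))) (hO : IsOpen O) (hO' : IsOpen O')
    (hsub : O' ⊆ O) (u : EuclideanSpace ℝ (Fin n) → ℝ) (hu : Measurable u)
    (hzero : ∀ᵐ x ∂(volume.restrict (O \ O')), u x = 0) :
    (∫⁻ x in O, ∫⁻ y in O, ENNReal.ofReal ((u x - u y) ^ 2 / dist x y ^ (n + 1))) =
      (∫⁻ x in O', ∫⁻ y in O', ENNReal.ofReal ((u x - u y) ^ 2 / dist x y ^ (n + 1))) +
        2 * ∫⁻ x in O',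
          (∫⁻ y in O \ O', ENNReal.ofReal (1 / dist x y ^ (n + 1))) *
            ENNReal.ofReal ((u x) ^ 2) := by
  have hF : Measurable fun p : EuclideanSpace ℝ (Fin n) × EuclideanSpace ℝ (Fin n) =>
      ENNReal.ofReal ((u p.1 - u p.2) ^ 2 / dist p.1 p.2 ^ (n + 1)) := by fun_prop
  have hsymm : ∀ x y : EuclideanSpace ℝ (Fin n),
      ENNReal.ofReal ((u x - u y) ^ 2 / dist x y ^ (n + 1)) =
        ENNReal.ofReal ((u y - u x) ^ 2 / dist y x ^ (n + 1)) := fun x y => by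
    rw [dist_comm, ← neg_sub, neg_sq]
  conv_lhs => rw [← union_sdiff_cancel hsub]
  rw [lintegral_lintegral_union_of_symm hF hsymm (hO.measurableSet.diff hO'.measurableSet)
      disjoint_sdiff_right, lintegral_lintegral_sq_sub_div_eq_zero _ hzero, add_zero]
  simp_rw [lintegral_sq_sub_div_eq_mul_of_ae_eq_zero (fun x y => dist x y ^ (n + 1)) hzero]

/-- Splitting of the Gagliardo seminorm of order `1/2`: if `u` vanishes a.e. on `O ∖ O'`, then
`∬_{O×O} |u(x)−u(y)|²/|x−y|^{n+1} = ∬_{O'×O'} |u(x)−u(y)|²/|x−y|^{n+1}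
  + 2 ∫_{O'} (∫_{O∖O'} |x−y|^{−(n+1)} dy) |u(x)|² dx`. -/
theorem gagliardo_half_split (n : ℕ) (hn : 1 ≤ n)
    (O O' : Set (EuclideanSpace ℝ (Fin n))) (hO : IsOpen O) (hO' : IsOpen O')
    (hsub : O' ⊆ O) (u : EuclideanSpace ℝ (Fin n) → ℝ) (hu : Measurable u)
    (hzero : ∀ᵐ x ∂(volume.restrict (O \ O')), u x = 0) :
    (∫⁻ x in O, ∫⁻ y in O, ENNReal.ofReal ((u x - u y) ^ 2 / dist x y ^ (n + 1))) =
      (∫⁻ x in O', ∫⁻ y in O', ENNReal.ofReal ((u x - u y) ^ 2 / dist x y ^ (n + 1))) +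
        2 * ∫⁻ x in O',
          (∫⁻ y in O \ O', ENNReal.ofReal (1 / dist x y ^ (n + 1))) *
            ENNReal.ofReal ((u x) ^ 2) :=
  gagliardo_half_split_general n O O' hO hO' hsub u hu hzero
end
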